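/- Fidelity bound for gentle conjugation. Let ρ_{AB} be a density operator on A⊗B, and let σ_B and Δ_B be positive semidefinite operators on B with ρ_B = Tr_A ρ_{AB} ≤ σ_B + Δ_B and σ_B + Δ_B positive definite. Set G_B = σ_B^{1/2}·(σ_B + Δ_B)^{−1/2}. Then F(ρ_{AB}, (1_A ⊗ G_B) ρ_{AB} (1_A ⊗ G_B†)) ≥ 1 − Tr Δ_B. -/

import Mathlib

open Matrix MeasureTheory
open scoped Kronecker ENNReal ComplexOrder

noncomputable section

/-- Borel measurable structure on matrices. -/
instance matrixMeasurableSpace (n : Type*) [Fintype n] : MeasurableSpace (Matrix n n ℂ) :=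
  borel _

/-- A density operator: positive semidefinite with unit trace. -/
def IsDensity {n : Type*} [Fintype n] (ρ : Matrix n n ℂ) : Prop :=
  ρ.PosSemidef ∧ ρ.trace = 1

/-- A subnormalized state: positive semidefinite with trace at most one. -/
def IsSubState {n : Type*} [Fintype n] (ρ : Matrix n n ℂ) : Prop :=
  ρ.PosSemidef ∧ (ρ.trace).re ≤ 1

/-- The square root `PosSemidef.sqrt` of the older Mathlib, spelled out with its old definition. -/
def posSemidefSqrt {n : Type*} [Fintype n] [DecidableEq n] {X : Matrix n n ℂ} (hX : X.PosSemidef) :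
    Matrix n n ℂ :=
  (hX.1.eigenvectorUnitary : Matrix n n ℂ) *
    diagonal (fun i => ((Real.sqrt (hX.1.eigenvalues i) : ℝ) : ℂ)) *
    (star hX.1.eigenvectorUnitary : Matrix n n ℂ)

-- Positive semidefinite square root (junk value `0` on non-PSD input).
open scoped Classical in
def msqrt {n : Type*} [Fintype n] [DecidableEq n] (X : Matrix n n ℂ) : Matrix n n ℂ :=
  if h : X.PosSemidef then posSemidefSqrt h else 0

/-- Trace norm `‖X‖₁ = Tr √(XᴴX)`. -/
def traceNorm {n : Type*} [Fintype n] [DecidableEq n] (X : Matrix n n ℂ) : ℝ :=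
  (posSemidefSqrt (Matrix.posSemidef_conjTranspose_mul_self X)).trace.re

/-- Fidelity `F(ρ,σ) = ‖√ρ√σ‖₁`. -/
def fid {n : Type*} [Fintype n] [DecidableEq n] (ρ σ : Matrix n n ℂ) : ℝ :=
  traceNorm (msqrt ρ * msqrt σ)

/-- Generalized fidelity of subnormalized states. -/
def gFid {n : Type*} [Fintype n] [DecidableEq n] (ρ σ : Matrix n n ℂ) : ℝ :=
  fid ρ σ + Real.sqrt ((1 - ρ.trace.re) * (1 - σ.trace.re))

/-- Purified distance. -/
def pDist {n : Type*} [Fintype n] [DecidableEq n] (ρ σ : Matrix n n ℂ) : ℝ :=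
  Real.sqrt (1 - (gFid ρ σ) ^ 2)

/-- The ε-ball of subnormalized states around `ρ` in purified distance. -/
def pBall {n : Type*} [Fintype n] [DecidableEq n] (ε : ℝ) (ρ : Matrix n n ℂ) :
    Set (Matrix n n ℂ) :=
  {τ | IsSubState τ ∧ pDist ρ τ ≤ ε}

/-- Partial trace over the second tensor factor. -/
def ptraceB {a b : Type*} [Fintype b] (ρ : Matrix (a × b) (a × b) ℂ) : Matrix a a ℂ :=
  Matrix.of fun i j => ∑ k, ρ (i, k) (j, k)

/-- Partial trace over the first tensor factor. -/
def ptraceA {a b : Type*} [Fintype a] (ρ : Matrix (a × b) (a × b) ℂ) : Matrix b b ℂ :=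
  Matrix.of fun i j => ∑ k, ρ (k, i) (k, j)

/-- Partial trace over the middle factor of `(S ⊗ E) ⊗ R`, giving a state on `S ⊗ R`. -/
def ptraceMid {s e r : Type*} [Fintype e]
    (ρ : Matrix ((s × e) × r) ((s × e) × r) ℂ) : Matrix (s × r) (s × r) ℂ :=
  Matrix.of fun p q => ∑ k, ρ ((p.1, k), p.2) ((q.1, k), q.2)

/-- Conditional min-entropy `H_min(A|B)_ρ` (first factor conditioned on the second). -/
def Hmin {a b : Type*} [Fintype a] [Fintype b] [DecidableEq a]
    (ρ : Matrix (a × b) (a × b) ℂ) : ℝ :=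
  sSup {l : ℝ | ∃ σ : Matrix b b ℂ, IsDensity σ ∧
    (((2 : ℝ) ^ (-l) • ((1 : Matrix a a ℂ) ⊗ₖ σ)) - ρ).PosSemidef}

/-- Smooth conditional min-entropy `H_min^ε(A|B)_ρ`. -/
def sHmin {a b : Type*} [Fintype a] [Fintype b] [DecidableEq a] [DecidableEq b]
    (ε : ℝ) (ρ : Matrix (a × b) (a × b) ℂ) : ℝ :=
  sSup (Hmin '' pBall ε ρ)

/-- Non-conditional min-entropy. -/
def Hmin0 {a : Type*} [Fintype a] [DecidableEq a] (ρ : Matrix a a ℂ) : ℝ :=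
  sSup {l : ℝ | (((2 : ℝ) ^ (-l) • (1 : Matrix a a ℂ)) - ρ).PosSemidef}

/-- Smooth non-conditional min-entropy. -/
def sHmin0 {a : Type*} [Fintype a] [DecidableEq a] (ε : ℝ) (ρ : Matrix a a ℂ) : ℝ :=
  sSup (Hmin0 '' pBall ε ρ)

/-- Conditional max-entropy `H_max(A|B)_ρ`. -/
def Hmax {a b : Type*} [Fintype a] [Fintype b] [DecidableEq a] [DecidableEq b]
    (ρ : Matrix (a × b) (a × b) ℂ) : ℝ :=
  sSup {x : ℝ | ∃ σ : Matrix b b ℂ, IsDensity σ ∧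
    x = Real.logb 2 ((fid ρ ((1 : Matrix a a ℂ) ⊗ₖ σ)) ^ 2)}

/-- Smooth conditional max-entropy `H_max^ε(A|B)_ρ`. -/
def sHmax {a b : Type*} [Fintype a] [Fintype b] [DecidableEq a] [DecidableEq b]
    (ε : ℝ) (ρ : Matrix (a × b) (a × b) ℂ) : ℝ :=
  sInf (Hmax '' pBall ε ρ)

/-- Non-conditional max-entropy `H_max(A)_ρ = log₂ F(ρ, 1)²`. -/
def Hmax0 {a : Type*} [Fintype a] [DecidableEq a] (ρ : Matrix a a ℂ) : ℝ :=
  Real.logb 2 ((fid ρ (1 : Matrix a a ℂ)) ^ 2)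

/-- Smooth non-conditional max-entropy. -/
def sHmax0 {a : Type*} [Fintype a] [DecidableEq a] (ε : ℝ) (ρ : Matrix a a ℂ) : ℝ :=
  sInf (Hmax0 '' pBall ε ρ)

/-- Alternative conditional min-entropy `Ĥ_min(A|B)_ρ` (conditioning on the marginal itself). -/
def HminAlt {a b : Type*} [Fintype a] [Fintype b] [DecidableEq a]
    (ρ : Matrix (a × b) (a × b) ℂ) : ℝ :=
  sSup {l : ℝ | (((2 : ℝ) ^ (-l) • ((1 : Matrix a a ℂ) ⊗ₖ ptraceA ρ)) - ρ).PosSemidef}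

/-- Alternative smooth conditional min-entropy `Ĥ_min^ε(A|B)_ρ`. -/
def sHminAlt {a b : Type*} [Fintype a] [Fintype b] [DecidableEq a] [DecidableEq b]
    (ε : ℝ) (ρ : Matrix (a × b) (a × b) ℂ) : ℝ :=
  sSup (HminAlt '' pBall ε ρ)

/-- Hypothesis-testing relative entropy
`2^{−D_H^ε(ρ‖σ)} = (1/ε)·inf{Tr(Qσ) : 0 ≤ Q ≤ 1, Tr(Qρ) ≥ ε}`. -/
def DH {n : Type*} [Fintype n] [DecidableEq n] (ε : ℝ) (ρ σ : Matrix n n ℂ) : ℝ :=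
  - Real.logb 2 ((1 / ε) *
    sInf {x : ℝ | ∃ Q : Matrix n n ℂ, Q.PosSemidef ∧ ((1 : Matrix n n ℂ) - Q).PosSemidef ∧
      ε ≤ ((Q * ρ).trace).re ∧ x = ((Q * σ).trace).re})

/-- Hypothesis-testing conditional entropy `H_h^ε(A|B)_ρ = −D_H^ε(ρ_{AB}‖1_A⊗ρ_B)`. -/
def Hh {a b : Type*} [Fintype a] [Fintype b] [DecidableEq a] [DecidableEq b]
    (ε : ℝ) (ρ : Matrix (a × b) (a × b) ℂ) : ℝ :=
  - DH ε ρ ((1 : Matrix a a ℂ) ⊗ₖ ptraceA ρ)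

/-- Non-conditional hypothesis-testing entropy `H_h^ε(A)_ρ = −D_H^ε(ρ‖1_A)`. -/
def Hh0 {a : Type*} [Fintype a] [DecidableEq a] (ε : ℝ) (ρ : Matrix a a ℂ) : ℝ :=
  - DH ε ρ (1 : Matrix a a ℂ)

/-- Choi matrix of a linear map on matrices. -/
def choi {a b : Type*} [Fintype a] [Fintype b] [DecidableEq a]
    (T : Matrix a a ℂ →ₗ[ℂ] Matrix b b ℂ) : Matrix (a × b) (a × b) ℂ :=
  Matrix.of fun p q => (T (Matrix.single p.1 q.1 1)) p.2 q.2

/-- Complete positivity, via positivity of the Choi matrix. -/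
def IsCP {a b : Type*} [Fintype a] [Fintype b] [DecidableEq a]
    (T : Matrix a a ℂ →ₗ[ℂ] Matrix b b ℂ) : Prop :=
  (choi T).PosSemidef

/-- Trace preservation. -/
def IsTP {a b : Type*} [Fintype a] [Fintype b]
    (T : Matrix a a ℂ →ₗ[ℂ] Matrix b b ℂ) : Prop :=
  ∀ X : Matrix a a ℂ, (T X).trace = X.trace

/-- The map `T ⊗ I_R` applied entrywise to a state on `A ⊗ R`. -/
def tensId {a b r : Type*} (T : Matrix a a ℂ →ₗ[ℂ] Matrix b b ℂ)
    (ρ : Matrix (a × r) (a × r) ℂ) : Matrix (b × r) (b × r) ℂ :=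
  Matrix.of fun p q => (T (Matrix.of fun i j => ρ (i, p.2) (j, q.2))) p.1 q.1

/-- A pure state: a rank-one projector `|v⟩⟨v|`. -/
def IsPure {n : Type*} (ρ : Matrix n n ℂ) : Prop :=
  ∃ v : n → ℂ, ρ = Matrix.vecMulVec v (star v)


/-!
Write `K = 1 ⊗ G`. Since `√(KρKᴴ)` is the modulus of `(K√ρ)ᴴ`, the product `√ρ √(KρKᴴ)` is
`√ρ K √ρ` up to a unitary, so its trace norm dominates `Re Tr(√ρ K √ρ) = Re Tr(ρ K) = Re Tr(ρ_B G)`.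
Polar decompositions are replaced by factorisations `X = (Q + ε) W` with `‖W‖ ≤ 1`, and `ε → 0`.

On `B`, put `a = √(σ + Δ)`, `b = √σ`, `c = a - b` and `ρ' = a⁻¹ ρ_B a⁻¹`. Operator monotonicity
of the square root gives `c ≥ 0`, and `ρ_B ≤ a²` gives `ρ' ≤ 1`. The defect
`Tr ρ_B - Re Tr(ρ_B b a⁻¹) = Re Tr(ρ' a c)` equals `½ Tr(ρ' (Δ + c²))` because `ac + ca = Δ + c²`;
it is at most `½ Tr(Δ + c²) ≤ Tr Δ`, as `Δ - c² = cb + bc` has nonnegative trace.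
-/

-- `‖·‖` is the L2 operator norm (making square matrices a C⋆-algebra) and `≤` the Loewner order.
open scoped MatrixOrder Matrix.Norms.L2Operator
open Filter Topology

lemma le_of_forall_pos_le_add_mul {a b c : ℝ} (h : ∀ ε > 0, a ≤ b + ε * c) : a ≤ b := by
  have hlim : Tendsto (fun ε : ℝ => b + ε * c) (𝓝[>] 0) (𝓝 b) := by
    have : Continuous fun ε : ℝ => b + ε * c := by fun_prop
    simpa using (this.tendsto 0).mono_left nhdsWithin_le_nhds
  exact ge_of_tendsto hlim (eventually_nhdsWithin_of_forall h)

namespace Matrix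

variable {n : Type*} [Fintype n]

lemma re_trace_nonneg {A : Matrix n n ℂ} (hA : 0 ≤ A) : 0 ≤ A.trace.re :=
  (Complex.nonneg_iff.mp hA.posSemidef.trace_nonneg).1

variable [DecidableEq n]

lemma norm_le_one_iff_conjTranspose_mul_self_le_one {V : Matrix n n ℂ} :
    ‖V‖ ≤ 1 ↔ Vᴴ * V ≤ 1 := by
  rw [← CStarAlgebra.norm_le_one_iff_of_nonneg _ (posSemidef_conjTranspose_mul_self V).nonneg,
    ← star_eq_conjTranspose, CStarRing.norm_star_mul_self, ← sq, sq_le_one_iff₀ (norm_nonneg V)]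

lemma re_trace_mul_nonneg {A B : Matrix n n ℂ} (hA : 0 ≤ A) (hB : 0 ≤ B) :
    0 ≤ (A * B).trace.re := by
  have hconj : 0 ≤ star (CFC.sqrt A) * B * CFC.sqrt A := star_left_conjugate_nonneg hB _
  rw [(CFC.sqrt_nonneg A).isSelfAdjoint.star_eq] at hconj
  rw [← CFC.sqrt_mul_sqrt_self A hA, mul_assoc, trace_mul_comm]
  exact re_trace_nonneg hconj

lemma re_trace_mul_le_re_trace_of_le_one {P Y : Matrix n n ℂ} (hP : P ≤ 1) (hY : 0 ≤ Y) :
    (P * Y).trace.re ≤ Y.trace.re := by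
  have := re_trace_mul_nonneg (sub_nonneg.mpr hP) hY
  rwa [sub_mul, one_mul, trace_sub, Complex.sub_re, sub_nonneg] at this

lemma re_trace_mul_le_re_trace_of_norm_le_one {S V : Matrix n n ℂ} (hS : 0 ≤ S)
    (hV : ‖V‖ ≤ 1) : (S * V).trace.re ≤ S.trace.re := by
  have hD : 0 ≤ (1 - V)ᴴ * (1 - V) + (1 - Vᴴ * V) :=
    add_nonneg (posSemidef_conjTranspose_mul_self _).nonneg
      (sub_nonneg.mpr (norm_le_one_iff_conjTranspose_mul_self_le_one.mp hV))
  have hD_eq : (1 - V)ᴴ * (1 - V) + (1 - Vᴴ * V) = (1 - V) + (1 - Vᴴ) := by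
    rw [conjTranspose_sub, conjTranspose_one]; noncomm_ring
  have hadj : (S * Vᴴ).trace = star (S * V).trace := by
    rw [← trace_conjTranspose, conjTranspose_mul, hS.posSemidef.1.eq, trace_mul_comm]
  have := re_trace_mul_nonneg hS hD
  rw [hD_eq, mul_add, mul_sub, mul_sub, mul_one, trace_add, trace_sub, trace_sub, hadj] at this
  simp only [Complex.add_re, Complex.sub_re, Complex.star_def, Complex.conj_re] at this
  linarith

lemma re_trace_sub_mul_self_le {a b : Matrix n n ℂ} (hb : 0 ≤ b) (hba : b ≤ a) :
    ((a - b) * (a - b)).trace.re ≤ (a * a - b * b).trace.re := by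
  have hsplit : a * a - b * b = (a - b) * (a - b) + ((a - b) * b + b * (a - b)) := by
    noncomm_ring
  have hcross : 0 ≤ ((a - b) * b + b * (a - b)).trace.re := by
    rw [trace_add, trace_mul_comm b, Complex.add_re]
    have := re_trace_mul_nonneg (sub_nonneg.mpr hba) hb
    linarith
  rw [hsplit, trace_add, Complex.add_re]
  linarith

/-- A regularised polar decomposition: `(Q + ε)⁻¹ X` is a contraction since `Q² ≤ (Q + ε)²`. -/
lemma exists_norm_le_one_eq_add_smul_one_mul {Q X : Matrix n n ℂ} (hQ : 0 ≤ Q)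
    (hX : X * Xᴴ = Q * Q) {ε : ℝ} (hε : 0 < ε) :
    ∃ W : Matrix n n ℂ, ‖W‖ ≤ 1 ∧ X = (Q + (ε : ℂ) • 1) * W := by
  set E := Q + (ε : ℂ) • (1 : Matrix n n ℂ)
  have hE : E.PosDef := PosDef.posSemidef_add hQ.posSemidef (by
    rw [smul_one_eq_diagonal, posDef_diagonal_iff]; exact fun _ => mod_cast hε)
  have hEu : IsUnit E.det := isUnit_iff_ne_zero.mpr hE.det_pos.ne'
  have hEinv : star E⁻¹ = E⁻¹ := by
    rw [star_eq_conjTranspose, conjTranspose_nonsing_inv, hE.1.eq]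
  have hQE : Q * Q ≤ E * E := by
    have : E * E = Q * Q + (((2 * ε : ℝ) : ℂ) • Q + ((ε ^ 2 : ℝ) : ℂ) • 1) := by
      simp only [E, add_mul, mul_add, smul_mul_assoc, mul_smul_comm, one_mul, mul_one]
      push_cast; module
    rw [this]
    refine le_add_of_nonneg_right (add_nonneg ?_ ?_)
    · exact (hQ.posSemidef.smul (by positivity)).nonneg
    · exact (PosSemidef.one.smul (by positivity)).nonneg
  refine ⟨E⁻¹ * X, ?_, by rw [← mul_assoc, mul_nonsing_inv E hEu, one_mul]⟩
  rw [← norm_star, star_eq_conjTranspose, norm_le_one_iff_conjTranspose_mul_self_le_one,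
    conjTranspose_conjTranspose]
  calc E⁻¹ * X * (E⁻¹ * X)ᴴ = star E⁻¹ * (Q * Q) * E⁻¹ := by
        rw [conjTranspose_mul, ← star_eq_conjTranspose E⁻¹, hEinv, ← hX]; noncomm_ring
    _ ≤ star E⁻¹ * (E * E) * E⁻¹ := star_left_conjugate_le_conjugate hQE _
    _ = 1 := by rw [hEinv, ← mul_assoc, nonsing_inv_mul E hEu, one_mul, mul_nonsing_inv E hEu]

lemma inv_mul_mul_inv_le_one {ρ a : Matrix n n ℂ} (ha : a.IsHermitian) (hunit : IsUnit a.det)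
    (hle : ρ ≤ a * a) : a⁻¹ * ρ * a⁻¹ ≤ 1 := by
  have hainv : star a⁻¹ = a⁻¹ := by
    rw [star_eq_conjTranspose, conjTranspose_nonsing_inv, ha.eq]
  calc a⁻¹ * ρ * a⁻¹ = star a⁻¹ * ρ * a⁻¹ := by rw [hainv]
    _ ≤ star a⁻¹ * (a * a) * a⁻¹ := star_left_conjugate_le_conjugate hle _
    _ = 1 := by
      rw [hainv, ← mul_assoc, nonsing_inv_mul a hunit, one_mul, mul_nonsing_inv a hunit]

lemma two_mul_re_trace_mul_mul {P a c : Matrix n n ℂ} (hP : P.IsHermitian) (ha : a.IsHermitian)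
    (hc : c.IsHermitian) : 2 * (P * (a * c)).trace.re = (P * (a * c + c * a)).trace.re := by
  have hadj : (P * (c * a)).trace = star (P * (a * c)).trace := by
    rw [← trace_conjTranspose, conjTranspose_mul, conjTranspose_mul, hP.eq, ha.eq, hc.eq,
      trace_mul_comm]
  rw [mul_add, trace_add, hadj, Complex.add_re, Complex.star_def, Complex.conj_re]
  ring

lemma re_trace_sub_le_re_trace_mul_sqrt_mul_inv_sqrt {ρ σ Δ : Matrix n n ℂ} (hσ : 0 ≤ σ)
    (hΔ : 0 ≤ Δ) (hle : ρ ≤ σ + Δ) (hpd : (σ + Δ).PosDef) :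
    ρ.trace.re - Δ.trace.re ≤ (ρ * (CFC.sqrt σ * (CFC.sqrt (σ + Δ))⁻¹)).trace.re := by
  set a := CFC.sqrt (σ + Δ)
  set b := CFC.sqrt σ
  set c := a - b
  have ha : 0 ≤ a := CFC.sqrt_nonneg _
  have hc : 0 ≤ c := sub_nonneg.mpr (CFC.sqrt_le_sqrt _ _ (le_add_of_nonneg_right hΔ))
  have haa : a * a = σ + Δ := CFC.sqrt_mul_sqrt_self _ (add_nonneg hσ hΔ)
  have hbb : b * b = σ := CFC.sqrt_mul_sqrt_self _ hσ
  have hunit : IsUnit a.det := by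
    refine isUnit_iff_ne_zero.mpr fun h => hpd.det_pos.ne' ?_
    rw [← haa, det_mul, h, zero_mul]
  set ρ' := a⁻¹ * ρ * a⁻¹
  have hρ' : ρ' ≤ 1 := inv_mul_mul_inv_le_one ha.posSemidef.1 hunit (haa ▸ hle)
  have hρ'_herm : ρ'.IsHermitian := by
    have := (sub_nonneg.mpr hρ').posSemidef.1.eq
    rwa [conjTranspose_sub, conjTranspose_one, sub_right_inj] at this
  have hdefect : ρ.trace - (ρ * (b * a⁻¹)).trace = (ρ' * (a * c)).trace := by
    have hρ'ac : ρ' * (a * c) = a⁻¹ * (ρ * c) := by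
      simp only [ρ', mul_assoc, ← mul_assoc a⁻¹ a, nonsing_inv_mul a hunit, one_mul]
    have hca : c * a⁻¹ = 1 - b * a⁻¹ := by simp only [c, sub_mul, mul_nonsing_inv a hunit]
    rw [hρ'ac, trace_mul_comm a⁻¹, mul_assoc, hca, mul_sub, mul_one, trace_sub]
  have hsum : a * c + c * a = Δ + c * c := by
    have hΔ_eq : Δ = a * a - b * b := by rw [haa, hbb, add_sub_cancel_left]
    rw [hΔ_eq]; simp only [c]; noncomm_ring
  have hsym := two_mul_re_trace_mul_mul hρ'_herm ha.posSemidef.1 hc.posSemidef.1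
  have hbound := re_trace_mul_le_re_trace_of_le_one hρ'
    (add_nonneg hΔ (hc.isSelfAdjoint.star_eq ▸ star_mul_self_nonneg c))
  have hcc : (c * c).trace.re ≤ Δ.trace.re := by
    have := re_trace_sub_mul_self_le (CFC.sqrt_nonneg σ) (sub_nonneg.mp hc)
    rwa [haa, hbb, add_sub_cancel_left] at this
  have hdefect_re := congrArg Complex.re hdefect
  rw [hsum] at hsym
  rw [Complex.sub_re] at hdefect_re
  rw [trace_add, Complex.add_re] at hbound
  linarith

end Matrix

section Fidelity

variable {n : Type*} [Fintype n] [DecidableEq n]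

lemma posSemidefSqrt_eq_sqrt {X : Matrix n n ℂ} (hX : X.PosSemidef) :
    posSemidefSqrt hX = CFC.sqrt X := by
  rw [CFC.sqrt_eq_real_sqrt X hX.nonneg, cfcₙ_eq_cfc, hX.1.cfc_eq]
  rfl

lemma msqrt_eq_sqrt (X : Matrix n n ℂ) : msqrt X = CFC.sqrt X := by
  by_cases hX : X.PosSemidef
  · rw [msqrt, dif_pos hX, posSemidefSqrt_eq_sqrt]
  · rw [msqrt, dif_neg hX, CFC.sqrt_eq_cfc, cfc_apply_of_not_predicate]
    exact fun h => hX h.posSemidef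

lemma traceNorm_eq_re_trace_sqrt (X : Matrix n n ℂ) :
    traceNorm X = (CFC.sqrt (Xᴴ * X)).trace.re := by
  rw [traceNorm, posSemidefSqrt_eq_sqrt]

lemma re_trace_mul_le_traceNorm (Y : Matrix n n ℂ) {V : Matrix n n ℂ} (hV : ‖V‖ ≤ 1) :
    (Y * V).trace.re ≤ traceNorm Y := by
  rw [traceNorm_eq_re_trace_sqrt]
  set R := CFC.sqrt (Yᴴ * Y)
  have hR : 0 ≤ R := CFC.sqrt_nonneg _
  have hRR : Yᴴ * Yᴴᴴ = R * R := by
    rw [conjTranspose_conjTranspose,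
      CFC.sqrt_mul_sqrt_self _ (posSemidef_conjTranspose_mul_self Y).nonneg]
  refine le_of_forall_pos_le_add_mul (c := Fintype.card n) fun ε hε => ?_
  obtain ⟨W, hW, hYW⟩ := exists_norm_le_one_eq_add_smul_one_mul hR hRR hε
  have hVW : ‖V * Wᴴ‖ ≤ 1 := by
    refine (norm_mul_le _ _).trans (mul_le_one₀ hV (norm_nonneg _) ?_)
    rwa [← star_eq_conjTranspose, norm_star]
  have hY : Y = Wᴴ * (R + (ε : ℂ) • 1) := by
    rw [← conjTranspose_conjTranspose Y, hYW, conjTranspose_mul, conjTranspose_add,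
      conjTranspose_smul, conjTranspose_one, hR.posSemidef.1.eq, Complex.star_def,
      Complex.conj_ofReal]
  have htrace : (Y * V).trace = (R * (V * Wᴴ)).trace + (ε : ℂ) * (V * Wᴴ).trace := by
    rw [hY, mul_assoc, trace_mul_comm, mul_assoc, add_mul, trace_add, smul_mul_assoc, one_mul,
      trace_smul, smul_eq_mul]
  have hVW_trace : (V * Wᴴ).trace.re ≤ Fintype.card n := by
    simpa using re_trace_mul_le_re_trace_of_norm_le_one PosSemidef.one.nonneg hVW
  rw [htrace, Complex.add_re, Complex.re_ofReal_mul]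
  exact add_le_add (re_trace_mul_le_re_trace_of_norm_le_one hR hVW)
    (mul_le_mul_of_nonneg_left hVW_trace hε.le)

lemma re_trace_mul_le_fid {ρ : Matrix n n ℂ} (hρ : 0 ≤ ρ) (K : Matrix n n ℂ) :
    (ρ * K).trace.re ≤ fid ρ (K * ρ * Kᴴ) := by
  rw [fid, msqrt_eq_sqrt, msqrt_eq_sqrt]
  set P := CFC.sqrt ρ
  set Q := CFC.sqrt (K * ρ * Kᴴ)
  have hP : 0 ≤ P := CFC.sqrt_nonneg _
  have hQ : 0 ≤ Q := CFC.sqrt_nonneg _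
  have hKP : (K * P) * (K * P)ᴴ = Q * Q := by
    rw [CFC.sqrt_mul_sqrt_self (K * ρ * Kᴴ) (star_right_conjugate_nonneg hρ K),
      conjTranspose_mul, hP.posSemidef.1.eq, mul_assoc, ← mul_assoc P,
      CFC.sqrt_mul_sqrt_self ρ hρ, mul_assoc]
  refine le_of_forall_pos_le_add_mul (c := P.trace.re) fun ε hε => ?_
  obtain ⟨W, hW, hKPW⟩ := exists_norm_le_one_eq_add_smul_one_mul hQ hKP hε
  have htrace : (ρ * K).trace = (P * Q * W).trace + (ε : ℂ) * (P * W).trace := by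
    have hρP : ρ = P * P := (CFC.sqrt_mul_sqrt_self ρ hρ).symm
    rw [hρP, mul_assoc, trace_mul_comm, mul_assoc, hKPW, ← mul_assoc, mul_add, add_mul,
      trace_add, mul_smul_comm, mul_one, smul_mul_assoc, trace_smul, smul_eq_mul]
  rw [htrace, Complex.add_re, Complex.re_ofReal_mul]
  exact add_le_add (re_trace_mul_le_traceNorm (P * Q) hW)
    (mul_le_mul_of_nonneg_left (re_trace_mul_le_re_trace_of_norm_le_one hP hW) hε.le)

end Fidelity

section PartialTrace

variable {A B : Type*} [Fintype A] [Fintype B]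

lemma trace_ptraceA (ρ : Matrix (A × B) (A × B) ℂ) : (ptraceA ρ).trace = ρ.trace := by
  simp only [trace, diag, ptraceA, of_apply, Fintype.sum_prod_type]
  exact Finset.sum_comm

lemma trace_mul_one_kronecker [DecidableEq A] (ρ : Matrix (A × B) (A × B) ℂ)
    (G : Matrix B B ℂ) : (ρ * ((1 : Matrix A A ℂ) ⊗ₖ G)).trace = (ptraceA ρ * G).trace := by
  simp only [trace, diag, mul_apply, kroneckerMap_apply, ptraceA, of_apply, one_apply,
    Fintype.sum_prod_type, ite_mul, one_mul, zero_mul, mul_ite, mul_zero, Finset.sum_ite_irrel,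
    Finset.sum_const_zero, Finset.sum_ite_eq', Finset.mem_univ, if_true, Finset.sum_mul]
  rw [Finset.sum_comm]
  exact Finset.sum_congr rfl fun _ _ => Finset.sum_comm

end PartialTrace

/-- Fidelity bound for gentle conjugation. -/
theorem fidelity_bound_gentle_conjugation
    {A B : Type*} [Fintype A] [DecidableEq A] [Fintype B] [DecidableEq B]
    (ρAB : Matrix (A × B) (A × B) ℂ) (hρ : IsDensity ρAB)
    (σB ΔB : Matrix B B ℂ) (hσ : σB.PosSemidef) (hΔ : ΔB.PosSemidef)
    (hle : (σB + ΔB - ptraceA ρAB).PosSemidef) (hpd : (σB + ΔB).PosDef)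
    (G : Matrix B B ℂ) (hG : G = msqrt σB * (msqrt (σB + ΔB))⁻¹) :
    1 - (ΔB.trace).re ≤
      fid ρAB (((1 : Matrix A A ℂ) ⊗ₖ G) * ρAB * ((1 : Matrix A A ℂ) ⊗ₖ G)ᴴ) := by
  refine le_trans ?_ (re_trace_mul_le_fid hρ.1.nonneg _)
  have hB := re_trace_sub_le_re_trace_mul_sqrt_mul_inv_sqrt hσ.nonneg hΔ.nonneg
    (le_iff.mpr hle) hpd
  rwa [trace_ptraceA, hρ.2, Complex.one_re, ← msqrt_eq_sqrt, ← msqrt_eq_sqrt, ← hG,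
    ← trace_mul_one_kronecker] at hB

end
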